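/- arXiv:2410.21102 — 8 statements merged into one kernel-verified Lean document; each statement's English description precedes it below -/
import Mathlib

section
/- For every countable family {π_i : i ∈ ℕ} of permutations of ℕ, there exists an infinite coinfinite set A ⊆ ℕ such that d(π_i[A]) = d(A) = 0 for every i ∈ ℕ. In particular, the density number 𝔡𝔡 is uncountable. -/
open Filter Topology

open scoped Classical in
noncomputable def cnt (A : Set ℕ) (n : ℕ) : ℕ :=
  ((Finset.range n).filter (fun m => m ∈ A)).card

def dens (A : Set ℕ) (r : ℝ) : Prop :=
  Tendsto (fun n => (cnt A n : ℝ) / n) atTop (𝓝 r)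

/-!
Since each `π i` is injective, it tends to infinity, so for every `k` all but finitely many `m`
satisfy `k ^ 2 ≤ m` and `k ^ 2 ≤ π i m` for all `i ≤ k`. Picking the `k`-th element `a k` of a
strictly increasing sequence among them, `A = range a` has at most `√n + 1` and `π i '' A` at most
`√n + i + 1` elements below `n`, hence have density zero; a set of density zero is coinfinite.
-/

lemma exists_strictMono_le_and_le_comp (g : ℕ → ℕ → ℕ) (hg : ∀ i, Function.Injective (g i))
    (b : ℕ → ℕ) : ∃ a : ℕ → ℕ, StrictMono a ∧ ∀ k, b k ≤ a k ∧ ∀ i ≤ k, b k ≤ g i (a k) := by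
  refine extraction_forall_of_eventually (P := fun k m => b k ≤ m ∧ ∀ i ≤ k, b k ≤ g i m)
    fun k => (eventually_ge_atTop (b k)).and ?_
  exact (eventually_all_finite (Set.finite_Iic k)).2 fun i _ =>
    (hg i).nat_tendsto_atTop.eventually_ge_atTop (b k)

lemma cnt_range_le_of_sq_le {f : ℕ → ℕ} {N : ℕ} (hf : ∀ k ≥ N, k ^ 2 ≤ f k) (n : ℕ) :
    cnt (Set.range f) n ≤ Nat.sqrt n + (N + 1) := by
  classical
  have hsub : (Finset.range n).filter (· ∈ Set.range f)
      ⊆ (Finset.range (Nat.sqrt n + (N + 1))).image f := by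
    intro m hm
    simp only [Finset.mem_filter, Finset.mem_range, Set.mem_range] at hm
    obtain ⟨hmn, k, rfl⟩ := hm
    refine Finset.mem_image_of_mem f (Finset.mem_range.2 ?_)
    by_cases hk : N ≤ k
    · have := Nat.le_sqrt'.2 ((hf k hk).trans hmn.le)
      omega
    · omega
  calc cnt (Set.range f) n ≤ ((Finset.range (Nat.sqrt n + (N + 1))).image f).card :=
        Finset.card_le_card hsub
    _ ≤ Nat.sqrt n + (N + 1) := Finset.card_image_le.trans (Finset.card_range _).le

lemma tendsto_sqrt_add_const_div_atTop (C : ℝ) :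
    Tendsto (fun n : ℕ => (Real.sqrt n + C) / n) atTop (𝓝 0) := by
  have hsqrt : Tendsto (fun n : ℕ => Real.sqrt n / n) atTop (𝓝 0) := by
    simp only [Real.sqrt_div_self]
    exact tendsto_inv_atTop_zero.comp
      (Real.tendsto_sqrt_atTop.comp tendsto_natCast_atTop_atTop)
  simpa [add_div] using hsqrt.add (tendsto_const_div_atTop_nhds_zero_nat C)

lemma dens_zero_of_cnt_le_sqrt_add {A : Set ℕ} {C : ℕ} (h : ∀ n, cnt A n ≤ Nat.sqrt n + C) :
    dens A 0 := by
  refine tendsto_of_tendsto_of_tendsto_of_le_of_le tendsto_const_nhds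
    (tendsto_sqrt_add_const_div_atTop C) (fun n => by positivity) fun n => ?_
  have hsqrt : (Nat.sqrt n : ℝ) ≤ Real.sqrt n :=
    Real.le_sqrt_of_sq_le (by exact_mod_cast Nat.sqrt_le' n)
  have hcnt : (cnt A n : ℝ) ≤ Nat.sqrt n + C := by exact_mod_cast h n
  exact div_le_div_of_nonneg_right (by linarith) n.cast_nonneg

lemma dens_range_zero_of_sq_le {f : ℕ → ℕ} {N : ℕ} (hf : ∀ k ≥ N, k ^ 2 ≤ f k) :
    dens (Set.range f) 0 :=
  dens_zero_of_cnt_le_sqrt_add (cnt_range_le_of_sq_le hf)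

lemma le_cnt_add_of_compl_subset {A : Set ℕ} {C : ℕ} (hC : Aᶜ ⊆ Set.Iio C) (n : ℕ) :
    n ≤ cnt A n + C := by
  classical
  have hsplit := Finset.card_filter_add_card_filter_not (s := Finset.range n) (· ∈ A)
  have hout : ((Finset.range n).filter (· ∉ A)).card ≤ C := by
    refine (Finset.card_le_card fun m hm => ?_).trans (Finset.card_range C).le
    exact Finset.mem_range.2 (hC (Finset.mem_filter.1 hm).2)
  rw [Finset.card_range] at hsplit
  unfold cnt
  omega

lemma infinite_compl_of_dens_zero {A : Set ℕ} (hA : dens A 0) : Aᶜ.Infinite := by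
  intro hfin
  obtain ⟨C, hC⟩ := hfin.bddAbove
  have hC' : Aᶜ ⊆ Set.Iio (C + 1) := fun m hm => Nat.lt_succ_of_le (hC hm)
  have hlow : Tendsto (fun n : ℕ => 1 - ((C + 1 : ℕ) : ℝ) / n) atTop (𝓝 1) := by
    simpa using tendsto_const_nhds.sub (tendsto_const_div_atTop_nhds_zero_nat ((C + 1 : ℕ) : ℝ))
  have hle : ∀ᶠ n : ℕ in atTop, 1 - ((C + 1 : ℕ) : ℝ) / n ≤ cnt A n / n := by
    filter_upwards [eventually_gt_atTop 0] with n hn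
    have hn' : (0 : ℝ) < n := by exact_mod_cast hn
    have : (n : ℝ) ≤ cnt A n + (C + 1 : ℕ) := by exact_mod_cast le_cnt_add_of_compl_subset hC' n
    rw [one_sub_div hn'.ne']
    exact div_le_div_of_nonneg_right (by linarith) hn'.le
  linarith [le_of_tendsto_of_tendsto hlow hA hle]

theorem stmt1 (π : ℕ → Equiv.Perm ℕ) :
    ∃ A : Set ℕ, A.Infinite ∧ Aᶜ.Infinite ∧ dens A 0 ∧ ∀ i : ℕ, dens ((π i) '' A) 0 := by
  obtain ⟨a, ha_mono, ha⟩ :=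
    exists_strictMono_le_and_le_comp (fun i => π i) (fun i => (π i).injective) (· ^ 2)
  have hA : dens (Set.range a) 0 := dens_range_zero_of_sq_le (N := 0) fun k _ => (ha k).1
  refine ⟨Set.range a, Set.infinite_range_of_injective ha_mono.injective,
    infinite_compl_of_dens_zero hA, hA, fun i => ?_⟩
  rw [← Set.range_comp]
  exact dens_range_zero_of_sq_le fun k hk => (ha k).2 i hk
end

section
/- Given any infinite coinfinite set A ⊆ ℕ and any r ∈ [0,1], there exists a permutation π of ℕ such that d(π[A]) = r. -/
/-!
A permutation of `ℕ` can carry any infinite coinfinite set onto any other one (match the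
sets, and their complements, bijectively), so it suffices to find one infinite coinfinite set
of density `r`. The `n` at which `⌊r n⌋` jumps form a set with exactly `⌊r n⌋` elements
below `n`; changing it on the squares, a set of density zero, makes it infinite and
coinfinite.
-/

open Filter Topology

theorem Set.exists_perm_image_eq {α : Type*} {A B : Set α} (e : A ≃ B) (f : ↥Aᶜ ≃ ↥Bᶜ) :
    ∃ π : Equiv.Perm α, π '' A = B := by
  classical
  let π : Equiv.Perm α :=
    (Equiv.Set.sumCompl A).symm.trans ((e.sumCongr f).trans (Equiv.Set.sumCompl B))
  have mem_iff (x : α) : π x ∈ B ↔ x ∈ A := by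
    by_cases hx : x ∈ A
    · simp [π, Equiv.Set.sumCompl_symm_apply_of_mem hx, hx]
    · simpa [π, Equiv.Set.sumCompl_symm_apply_of_notMem hx, hx]
        using Set.notMem_of_mem_compl (f ⟨x, hx⟩).2
  refine ⟨π, Set.ext fun y => ?_⟩
  rw [π.image_eq_preimage_symm, Set.mem_preimage, ← mem_iff, π.apply_symm_apply]

theorem Set.exists_perm_image_eq_of_infinite {α : Type*} [Countable α] {A B : Set α}
    (hA : A.Infinite) (hA' : Aᶜ.Infinite) (hB : B.Infinite) (hB' : Bᶜ.Infinite) :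
    ∃ π : Equiv.Perm α, π '' A = B :=
  have := hA.to_subtype; have := hA'.to_subtype
  have := hB.to_subtype; have := hB'.to_subtype
  exists_perm_image_eq (Classical.arbitrary _) (Classical.arbitrary _)

section Counting

open scoped Classical

theorem cnt_succ (A : Set ℕ) (n : ℕ) :
    cnt A (n + 1) = cnt A n + if n ∈ A then 1 else 0 := by
  unfold cnt
  rw [Finset.range_add_one, Finset.filter_insert]
  split <;> simp [Finset.card_insert_of_notMem]

theorem cnt_mono {X Y : Set ℕ} (h : X ⊆ Y) (n : ℕ) : cnt X n ≤ cnt Y n :=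
  Finset.card_le_card (Finset.monotone_filter_right _ fun _ _ hx => h hx)

theorem cnt_union_le (X Y : Set ℕ) (n : ℕ) : cnt (X ∪ Y) n ≤ cnt X n + cnt Y n := by
  unfold cnt
  simp only [Set.mem_union, Finset.filter_or]
  exact Finset.card_union_le _ _

end Counting

theorem cnt_setOf_lt_succ {g : ℕ → ℕ} (h0 : g 0 = 0) (hmono : ∀ n, g n ≤ g (n + 1))
    (hstep : ∀ n, g (n + 1) ≤ g n + 1) (n : ℕ) : cnt {m | g m < g (m + 1)} n = g n := by
  induction n with
  | zero => simp [cnt, h0]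
  | succ n ih =>
    rw [cnt_succ, ih]
    have := hmono n
    have := hstep n
    split_ifs with h <;> simp only [Set.mem_ofPred_eq] at h <;> omega

theorem dens_of_subset_union {X Y Z : Set ℕ} {r : ℝ} (hX : dens X r) (hZ : dens Z 0)
    (hXY : X ⊆ Y ∪ Z) (hYX : Y ⊆ X ∪ Z) : dens Y r := by
  have le_add {U V : Set ℕ} (h : U ⊆ V ∪ Z) (n : ℕ) :
      (cnt U n : ℝ) / n ≤ cnt V n / n + cnt Z n / n := by
    rw [← add_div]
    gcongr
    exact_mod_cast (cnt_mono h n).trans (cnt_union_le V Z n)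
  have lower := hX.sub hZ
  have upper := hX.add hZ
  rw [sub_zero] at lower
  rw [add_zero] at upper
  exact tendsto_of_tendsto_of_tendsto_of_le_of_le lower upper
    (fun n => sub_le_iff_le_add.mpr (le_add hXY n)) (le_add hYX)

theorem dens_setOf_floor_mul_lt {r : ℝ} (hr0 : 0 ≤ r) (hr1 : r ≤ 1) :
    dens {n | ⌊r * (n : ℕ)⌋₊ < ⌊r * ((n + 1 : ℕ) : ℝ)⌋₊} r := by
  have hcnt := cnt_setOf_lt_succ (g := fun n : ℕ => ⌊r * n⌋₊) (by simp)
    (fun n => Nat.floor_le_floor (by gcongr; simp))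
    (fun n => by
      calc ⌊r * ((n + 1 : ℕ) : ℝ)⌋₊ ≤ ⌊r * n + 1⌋₊ :=
            Nat.floor_le_floor (by push_cast; nlinarith)
        _ = ⌊r * n⌋₊ + 1 := Nat.floor_add_one (by positivity))
  unfold dens
  simp only [hcnt]
  exact (tendsto_nat_floor_mul_div_atTop hr0).comp tendsto_natCast_atTop_atTop

theorem cnt_range_sq_le (n : ℕ) : cnt (Set.range (· ^ 2)) n ≤ Nat.sqrt n + 1 := by
  classical
  unfold cnt
  calc _ ≤ ((Finset.range (Nat.sqrt n + 1)).image (· ^ 2)).card := by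
        refine Finset.card_le_card fun m hm => ?_
        simp only [Finset.mem_filter, Finset.mem_range, Set.mem_range] at hm
        obtain ⟨hmn, k, rfl⟩ := hm
        simp only [Finset.mem_image, Finset.mem_range]
        exact ⟨k, Nat.lt_succ_of_le (Nat.le_sqrt'.mpr hmn.le), rfl⟩
    _ ≤ Nat.sqrt n + 1 := Finset.card_image_le.trans (by simp)

theorem dens_range_sq : dens (Set.range (· ^ 2)) 0 := by
  have hbound : Tendsto (fun n : ℕ => 1 / √(n : ℝ) + 1 / (n : ℝ)) atTop (𝓝 0) := by
    simpa using ((tendsto_const_nhds (x := (1 : ℝ))).div_atTop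
      (Real.tendsto_sqrt_atTop.comp tendsto_natCast_atTop_atTop)).add
      ((tendsto_const_nhds (x := (1 : ℝ))).div_atTop tendsto_natCast_atTop_atTop)
  refine squeeze_zero (fun n => by positivity) (fun n => ?_) hbound
  rcases n.eq_zero_or_pos with rfl | hn
  · simp
  calc (cnt (Set.range (· ^ 2)) n : ℝ) / n ≤ (√(n : ℝ) + 1) / n := by
        gcongr
        exact (Nat.cast_le.mpr (cnt_range_sq_le n)).trans
          (by push_cast; gcongr; exact Real.nat_sqrt_le_real_sqrt)
    _ = 1 / √(n : ℝ) + 1 / n := by rw [add_div, Real.sqrt_div_self']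

theorem exists_dens_infinite_compl_infinite {r : ℝ} (hr0 : 0 ≤ r) (hr1 : r ≤ 1) :
    ∃ B : Set ℕ, dens B r ∧ B.Infinite ∧ Bᶜ.Infinite := by
  set F : Set ℕ := {n | ⌊r * (n : ℕ)⌋₊ < ⌊r * ((n + 1 : ℕ) : ℝ)⌋₊}
  set S : Set ℕ := Set.range (· ^ 2)
  set E : Set ℕ := Set.range fun k => (2 * k) ^ 2
  set O : Set ℕ := Set.range fun k => (2 * k + 1) ^ 2
  have sq_inj := Nat.pow_left_injective (n := 2) two_ne_zero
  have hES : E ⊆ S := Set.range_comp_subset_range (2 * ·) (· ^ 2)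
  have hOS : O ⊆ S := Set.range_comp_subset_range (2 * · + 1) (· ^ 2)
  have hEO : Disjoint E O := by
    rw [Set.disjoint_left]
    rintro _ ⟨k, rfl⟩ ⟨j, hj⟩
    have := sq_inj hj
    omega
  have hE : E.Infinite := Set.infinite_range_of_injective fun a b h => by
    have := sq_inj h
    omega
  have hO : O.Infinite := Set.infinite_range_of_injective fun a b h => by
    have := sq_inj h
    omega
  -- Even squares in, odd squares out: a density-zero change that works also for `r ∈ {0, 1}`.
  refine ⟨(F ∪ E) \ O, dens_of_subset_union (dens_setOf_floor_mul_lt hr0 hr1) dens_range_sq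
    ?_ ?_, hE.mono ?_, hO.mono ?_⟩
  · intro x hx
    by_cases hxO : x ∈ O
    exacts [.inr (hOS hxO), .inl ⟨.inl hx, hxO⟩]
  · exact fun x hx => hx.1.elim .inl fun hxE => .inr (hES hxE)
  · exact fun x hx => ⟨Or.inr hx, Set.disjoint_left.mp hEO hx⟩
  · exact fun x hx hB => hB.2 hx

theorem stmt2 (A : Set ℕ) (hA : A.Infinite) (hA' : Aᶜ.Infinite)
    (r : ℝ) (hr : r ∈ Set.Icc (0 : ℝ) 1) :
    ∃ π : Equiv.Perm ℕ, dens (π '' A) r := by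
  obtain ⟨B, hB, hBinf, hBcinf⟩ := exists_dens_infinite_compl_infinite hr.1 hr.2
  obtain ⟨π, hπ⟩ := Set.exists_perm_image_eq_of_infinite hA hA' hBinf hBcinf
  exact ⟨π, hπ ▸ hB⟩
end

section
/- Given any infinite coinfinite set A ⊆ ℕ, there exists a permutation π of ℕ such that π[A] has no asymptotic density, i.e., liminf_n |π[A] ∩ [0,n)|/n < limsup_n |π[A] ∩ [0,n)|/n. -/
/-!
Any two infinite coinfinite subsets of `ℕ` are carried onto each other by a permutation, since
both the sets and their complements are countably infinite. So it suffices to exhibit one such set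
without density: the union of the blocks `[4 ^ (2k), 4 ^ (2k + 1))` has counting ratio at least
`3/4` at `n = 4 ^ (2k + 1)` (the last block alone fills three quarters of `[0, n)`) and at most
`1/4` at `n = 4 ^ (2k + 2)` (nothing of it lies in the top three quarters of `[0, n)`).
-/

open Filter Topology

theorem exists_perm_image_eq {α : Type*} [Countable α] {s t : Set α} (hs : s.Infinite)
    (hsc : sᶜ.Infinite) (ht : t.Infinite) (htc : tᶜ.Infinite) :
    ∃ π : Equiv.Perm α, π '' s = t := by
  classical
  have := hs.to_subtype; have := hsc.to_subtype; have := ht.to_subtype; have := htc.to_subtype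
  obtain ⟨e⟩ : Nonempty (s ≃ t) := nonempty_equiv_of_countable
  obtain ⟨f⟩ : Nonempty (↥sᶜ ≃ ↥tᶜ) := nonempty_equiv_of_countable
  refine ⟨Equiv.subtypeCongr e f, Set.ext fun b => ⟨?_, fun hb => ?_⟩⟩
  · rintro ⟨a, ha, rfl⟩
    simp [Equiv.subtypeCongr, ha]
  · refine ⟨e.symm ⟨b, hb⟩, (e.symm ⟨b, hb⟩).2, ?_⟩
    simp [Equiv.subtypeCongr, (e.symm ⟨b, hb⟩).2]

theorem liminf_lt_limsup_of_frequently {ι β : Type*} [ConditionallyCompleteLinearOrder β]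
    {l : Filter ι} {u : ι → β} {a b : β} (hab : a < b)
    (hlo : ∃ᶠ i in l, u i ≤ a) (hhi : ∃ᶠ i in l, b ≤ u i)
    (hbdd_below : l.IsBoundedUnder (· ≥ ·) u) (hbdd_above : l.IsBoundedUnder (· ≤ ·) u) :
    liminf u l < limsup u l :=
  calc liminf u l ≤ a := liminf_le_of_frequently_le hlo hbdd_below
    _ < b := hab
    _ ≤ limsup u l := le_limsup_of_frequently_le hhi hbdd_above

theorem cnt_le (A : Set ℕ) (n : ℕ) : cnt A n ≤ n := by
  classical
  simpa [cnt] using Finset.card_filter_le (Finset.range n) (· ∈ A)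

theorem isBoundedUnder_le_cnt_div (A : Set ℕ) :
    atTop.IsBoundedUnder (· ≤ ·) fun n => (cnt A n : ℝ) / n :=
  isBoundedUnder_of ⟨1, fun n => div_le_one_of_le₀ (by exact_mod_cast cnt_le A n) n.cast_nonneg⟩

theorem isBoundedUnder_ge_cnt_div (A : Set ℕ) :
    atTop.IsBoundedUnder (· ≥ ·) fun n => (cnt A n : ℝ) / n :=
  isBoundedUnder_of ⟨0, fun n => by positivity⟩

/- The union of the blocks `[4 ^ (2 * k), 4 ^ (2 * k + 1))`, plus `0` since `Nat.log 4 0 = 0`. -/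
def evenLog4 : Set ℕ := {n | Even (Nat.log 4 n)}

theorem mem_evenLog4 {n : ℕ} : n ∈ evenLog4 ↔ Even (Nat.log 4 n) := Iff.rfl

theorem pow_mem_evenLog4_iff (j : ℕ) : 4 ^ j ∈ evenLog4 ↔ Even j := by
  rw [mem_evenLog4, Nat.log_pow (by norm_num)]

theorem evenLog4_infinite : evenLog4.Infinite :=
  Set.infinite_of_injective_forall_mem (f := fun k => 4 ^ (2 * k))
    (fun a b h => by have := Nat.pow_right_injective (a := 4) (by norm_num) h; omega)
    (fun k => (pow_mem_evenLog4_iff _).2 (even_two_mul k))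

theorem evenLog4_compl_infinite : evenLog4ᶜ.Infinite :=
  Set.infinite_of_injective_forall_mem (f := fun k => 4 ^ (2 * k + 1))
    (fun a b h => by have := Nat.pow_right_injective (a := 4) (by norm_num) h; omega)
    (fun k => by simp [pow_mem_evenLog4_iff])

theorem three_mul_le_cnt_evenLog4 (k : ℕ) : 3 * 4 ^ (2 * k) ≤ cnt evenLog4 (4 ^ (2 * k + 1)) := by
  classical
  have hblock : Finset.Ico (4 ^ (2 * k)) (4 ^ (2 * k + 1)) ⊆
      (Finset.range (4 ^ (2 * k + 1))).filter (· ∈ evenLog4) := fun m hm => by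
    rw [Finset.mem_Ico] at hm
    refine Finset.mem_filter.2 ⟨Finset.mem_range.2 hm.2, ?_⟩
    rw [mem_evenLog4, Nat.log_eq_of_pow_le_of_lt_pow hm.1 hm.2]
    exact even_two_mul k
  have hlen : 4 ^ (2 * k + 1) - 4 ^ (2 * k) = 3 * 4 ^ (2 * k) := by rw [pow_succ]; omega
  simpa only [cnt, Nat.card_Ico, hlen] using Finset.card_le_card hblock

theorem cnt_evenLog4_le (k : ℕ) : cnt evenLog4 (4 ^ (2 * k + 2)) ≤ 4 ^ (2 * k + 1) := by
  classical
  have hinit : (Finset.range (4 ^ (2 * k + 2))).filter (· ∈ evenLog4) ⊆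
      Finset.range (4 ^ (2 * k + 1)) := fun m hm => by
    rw [Finset.mem_filter, Finset.mem_range] at hm
    rw [Finset.mem_range]
    have hlog : Nat.log 4 m < 2 * k + 2 := Nat.log_lt_of_lt_pow' (by omega) hm.1
    have hlog' : Nat.log 4 m ≤ 2 * k := by
      obtain ⟨j, hj⟩ := mem_evenLog4.1 hm.2
      omega
    exact (Nat.lt_pow_succ_log_self (by norm_num) m).trans_le
      (Nat.pow_le_pow_right (by norm_num) (by omega))
  simpa [cnt] using Finset.card_le_card hinit

theorem frequently_le_cnt_div_evenLog4 :
    ∃ᶠ n in atTop, (3 / 4 : ℝ) ≤ cnt evenLog4 n / n := by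
  have hmono : StrictMono fun k => 4 ^ (2 * k + 1) := fun a b h =>
    Nat.pow_lt_pow_right (by norm_num) (by omega)
  refine hmono.tendsto_atTop.frequently (Frequently.of_forall fun k => ?_)
  have h : ((3 * 4 ^ (2 * k) : ℕ) : ℝ) ≤ cnt evenLog4 (4 ^ (2 * k + 1)) :=
    mod_cast three_mul_le_cnt_evenLog4 k
  push_cast at h ⊢
  rw [le_div_iff₀ (by positivity)]
  calc (3 / 4 : ℝ) * 4 ^ (2 * k + 1) = 3 * 4 ^ (2 * k) := by ring
    _ ≤ _ := h

theorem frequently_cnt_div_evenLog4_le :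
    ∃ᶠ n in atTop, (cnt evenLog4 n / n : ℝ) ≤ 1 / 4 := by
  have hmono : StrictMono fun k => 4 ^ (2 * k + 2) := fun a b h =>
    Nat.pow_lt_pow_right (by norm_num) (by omega)
  refine hmono.tendsto_atTop.frequently (Frequently.of_forall fun k => ?_)
  have h : (cnt evenLog4 (4 ^ (2 * k + 2)) : ℝ) ≤ ((4 ^ (2 * k + 1) : ℕ) : ℝ) :=
    mod_cast cnt_evenLog4_le k
  push_cast at h ⊢
  rw [div_le_iff₀ (by positivity)]
  calc (cnt evenLog4 (4 ^ (2 * k + 2)) : ℝ) ≤ 4 ^ (2 * k + 1) := h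
    _ = 1 / 4 * 4 ^ (2 * k + 2) := by ring

theorem stmt3 (A : Set ℕ) (hA : A.Infinite) (hA' : Aᶜ.Infinite) :
    ∃ π : Equiv.Perm ℕ,
      Filter.liminf (fun n => (cnt (π '' A) n : ℝ) / n) atTop <
      Filter.limsup (fun n => (cnt (π '' A) n : ℝ) / n) atTop := by
  obtain ⟨π, hπ⟩ := exists_perm_image_eq hA hA' evenLog4_infinite evenLog4_compl_infinite
  exact ⟨π, hπ ▸ liminf_lt_limsup_of_frequently (by norm_num) frequently_cnt_div_evenLog4_le
    frequently_le_cnt_div_evenLog4 (isBoundedUnder_ge_cnt_div _) (isBoundedUnder_le_cnt_div _)⟩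
end

section
/- A series ∑ a_n of real numbers is potentially conditionally convergent (i.e., some rearrangement of it is conditionally convergent) if and only if a_n → 0, the sum of the nonnegative terms is +∞, and the sum of the nonpositive terms is -∞. -/
/-!
If some rearrangement converges, its terms tend to zero, and summability of the positive parts
together with convergence would force absolute convergence (likewise for the negative parts);
summability is invariant under permutations.

Conversely, list the positive terms `x` and the nonpositive terms `y` of `a` in their order and
merge them greedily: take the next `x` while the running sum is `≤ 0`, the next `y` otherwise.
Since `∑ x = +∞` and `∑ y = -∞`, the running sum changes sign infinitely often, so every term is
used. Once the terms are smaller than `c`, each step either moves the sum towards zero or across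
zero by less than `c`, so the sum is eventually trapped in `(-c, c)`.
-/

open Filter Topology Finset Nat

theorem tendsto_zero_of_tendsto_sum_range {G : Type*} [AddCommGroup G] [TopologicalSpace G]
    [IsTopologicalAddGroup G] {b : ℕ → G} {s : G}
    (hs : Tendsto (fun N => ∑ n ∈ range N, b n) atTop (𝓝 s)) : Tendsto b atTop (𝓝 0) := by
  simpa [sum_range_succ] using (hs.comp (tendsto_add_atTop_nat 1)).sub hs

theorem not_summable_iff_tendsto_nat_atBot_of_nonpos {f : ℕ → ℝ} (hf : ∀ n, f n ≤ 0) :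
    ¬Summable f ↔ Tendsto (fun n => ∑ i ∈ range n, f i) atTop atBot := by
  rw [← summable_neg_iff,
    not_summable_iff_tendsto_nat_atTop_of_nonneg fun n => neg_nonneg.2 (hf n),
    ← tendsto_neg_atBot_iff]
  simp [sum_neg_distrib]

theorem summable_abs_of_tendsto_sum_range_of_summable_max {b : ℕ → ℝ} {s : ℝ}
    (hs : Tendsto (fun N => ∑ n ∈ range N, b n) atTop (𝓝 s))
    (hb : Summable fun n => max (b n) 0) : Summable fun n => |b n| := by
  have hneg : Summable fun n => max (b n) 0 - b n := by
    refine ((hasSum_iff_tendsto_nat_of_nonneg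
      (fun n => sub_nonneg.2 (le_max_left _ _)) ((∑' n, max (b n) 0) - s)).2 ?_).summable
    simpa only [sum_sub_distrib] using hb.hasSum.tendsto_sum_nat.sub hs
  refine (hb.add hneg).congr fun n => ?_
  rcases le_total (b n) 0 with h | h
  · simp [max_eq_right h, abs_of_nonpos h]
  · simp [max_eq_left h, abs_of_nonneg h]

theorem summable_abs_of_tendsto_sum_range_of_summable_min {b : ℕ → ℝ} {s : ℝ}
    (hs : Tendsto (fun N => ∑ n ∈ range N, b n) atTop (𝓝 s))
    (hb : Summable fun n => min (b n) 0) : Summable fun n => |b n| := by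
  simpa using summable_abs_of_tendsto_sum_range_of_summable_max (b := fun n => -b n)
    (s := -s) (by simpa only [sum_neg_distrib] using hs.neg)
    (by simpa [← max_neg_neg] using hb.neg)

theorem infinite_and_not_summable_comp_nth {M : Type*} [AddCommMonoid M] [TopologicalSpace M]
    {f : ℕ → M} {P : ℕ → Prop} (hf : ∀ n, ¬P n → f n = 0) (h : ¬Summable f) :
    {n | P n}.Infinite ∧ ¬Summable (f ∘ nth P) := by
  have hP : {n | P n}.Infinite := fun hfin =>
    h (summable_of_hasFiniteSupport (hfin.subset fun n hn => by_contra fun hPn => hn (hf n hPn)))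
  refine ⟨hP, fun hs => h (((nth_injective hP).summable_iff fun n hn => hf n ?_).1 hs)⟩
  rwa [range_nth_of_infinite hP] at hn

theorem eventually_lt_of_frequently_lt {α : Type*} [Preorder α] {T : ℕ → α} {c : α}
    (hstep : ∀ᶠ k in atTop, T (k + 1) < c ∨ T (k + 1) ≤ T k) (hfreq : ∃ᶠ k in atTop, T k < c) :
    ∀ᶠ k in atTop, T k < c := by
  obtain ⟨K, hK⟩ := eventually_atTop.1 hstep
  obtain ⟨k₀, hk₀K, hk₀⟩ := frequently_atTop.1 hfreq K
  refine eventually_atTop.2 ⟨k₀, fun k hk => ?_⟩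
  induction k, hk using Nat.le_induction with
  | base => exact hk₀
  | succ k hk ih => exact (hK k (hk₀K.trans hk)).elim id fun h => h.trans_lt ih

section GreedyMerge

variable (x y : ℕ → ℝ)

/-- `greedyIndex x y k = (i, j)` when the first `k` steps of the greedy merge of `x` and `y` have
used `x 0, …, x (i - 1)` and `y 0, …, y (j - 1)`. -/
noncomputable def greedyIndex : ℕ → ℕ × ℕ
  | 0 => (0, 0)
  | k + 1 =>
    let s := greedyIndex k
    if ∑ i ∈ range s.1, x i + ∑ j ∈ range s.2, y j ≤ 0 then (s.1 + 1, s.2) else (s.1, s.2 + 1)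

noncomputable def greedySum (k : ℕ) : ℝ :=
  ∑ i ∈ range (greedyIndex x y k).1, x i + ∑ j ∈ range (greedyIndex x y k).2, y j

variable {x y}

theorem greedySum_zero : greedySum x y 0 = 0 := by
  simp [greedySum, greedyIndex]

theorem greedyIndex_succ (k : ℕ) : greedyIndex x y (k + 1) =
    if greedySum x y k ≤ 0 then ((greedyIndex x y k).1 + 1, (greedyIndex x y k).2)
    else ((greedyIndex x y k).1, (greedyIndex x y k).2 + 1) :=
  rfl

theorem greedyIndex_eq_count (k : ℕ) :
    greedyIndex x y k = (count (greedySum x y · ≤ 0) k, count (¬greedySum x y · ≤ 0) k) := by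
  induction k with
  | zero => rfl
  | succ k ih =>
    rw [greedyIndex_succ, ih, count_succ, count_succ]
    split_ifs <;> simp

theorem greedySum_succ (k : ℕ) : greedySum x y (k + 1) = greedySum x y k +
    if greedySum x y k ≤ 0 then x (greedyIndex x y k).1 else y (greedyIndex x y k).2 := by
  conv_lhs => rw [greedySum, greedyIndex_succ]
  split_ifs <;> simp only [greedySum, sum_range_succ] <;> ring

theorem greedySum_succ_sub (k : ℕ) : greedySum x y (k + 1) - greedySum x y k =
    if greedySum x y k ≤ 0 then x (count (greedySum x y · ≤ 0) k)
    else y (count (¬greedySum x y · ≤ 0) k) := by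
  rw [greedySum_succ, add_sub_cancel_left, greedyIndex_eq_count]

theorem greedySum_le_greedySum_succ (hx : ∀ i, 0 ≤ x i) {k : ℕ} (hk : greedySum x y k ≤ 0) :
    greedySum x y k ≤ greedySum x y (k + 1) := by
  rw [greedySum_succ, if_pos hk]
  exact le_add_of_nonneg_right (hx _)

theorem greedySum_succ_le_greedySum (hy : ∀ j, y j ≤ 0) {k : ℕ} (hk : 0 < greedySum x y k) :
    greedySum x y (k + 1) ≤ greedySum x y k := by
  rw [greedySum_succ, if_neg hk.not_ge]
  exact add_le_of_nonpos_right (hy _)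

theorem greedyIndex_add_of_forall_nonpos {K : ℕ} (h : ∀ k ≥ K, greedySum x y k ≤ 0) (d : ℕ) :
    greedyIndex x y (K + d) = ((greedyIndex x y K).1 + d, (greedyIndex x y K).2) := by
  induction d with
  | zero => rfl
  | succ d ih => rw [← add_assoc, greedyIndex_succ, if_pos (h _ (le_add_right _ _)), ih]; rfl

theorem greedyIndex_add_of_forall_pos {K : ℕ} (h : ∀ k ≥ K, 0 < greedySum x y k) (d : ℕ) :
    greedyIndex x y (K + d) = ((greedyIndex x y K).1, (greedyIndex x y K).2 + d) := by
  induction d with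
  | zero => rfl
  | succ d ih => rw [← add_assoc, greedyIndex_succ, if_neg (h _ (le_add_right _ _)).not_ge, ih]; rfl

theorem frequently_greedySum_nonpos (hy : Tendsto (fun n => ∑ j ∈ range n, y j) atTop atBot) :
    ∃ᶠ k in atTop, greedySum x y k ≤ 0 := by
  rw [Filter.Frequently, eventually_atTop]
  rintro ⟨K, hK⟩
  have hpos : ∀ k ≥ K, 0 < greedySum x y k := fun k hk => not_le.1 (hK k hk)
  have hlim : Tendsto (fun d => greedySum x y (K + d)) atTop atBot := by
    simp only [greedySum, greedyIndex_add_of_forall_pos hpos]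
    exact tendsto_atBot_add_const_left _ _
      (hy.comp (tendsto_atTop_mono (Nat.le_add_left · _) tendsto_id))
  obtain ⟨d, hd⟩ := (hlim.eventually (eventually_le_atBot 0)).exists
  exact hK (K + d) (le_add_right _ _) hd

theorem frequently_greedySum_pos (hx : Tendsto (fun n => ∑ i ∈ range n, x i) atTop atTop) :
    ∃ᶠ k in atTop, 0 < greedySum x y k := by
  rw [Filter.Frequently, eventually_atTop]
  rintro ⟨K, hK⟩
  have hnonpos : ∀ k ≥ K, greedySum x y k ≤ 0 := fun k hk => not_lt.1 (hK k hk)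
  have hlim : Tendsto (fun d => greedySum x y (K + d)) atTop atTop := by
    simp only [greedySum, greedyIndex_add_of_forall_nonpos hnonpos]
    exact tendsto_atTop_add_const_right _ _
      (hx.comp (tendsto_atTop_mono (Nat.le_add_left · _) tendsto_id))
  obtain ⟨d, hd⟩ := (hlim.eventually (eventually_gt_atTop 0)).exists
  exact hK (K + d) (le_add_right _ _) hd

theorem tendsto_greedySum_zero (hx₀ : ∀ i, 0 ≤ x i) (hy₀ : ∀ j, y j ≤ 0)
    (hx : Tendsto (fun n => ∑ i ∈ range n, x i) atTop atTop)
    (hy : Tendsto (fun n => ∑ j ∈ range n, y j) atTop atBot)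
    (hstep : Tendsto (fun k => greedySum x y (k + 1) - greedySum x y k) atTop (𝓝 0)) :
    Tendsto (greedySum x y) atTop (𝓝 0) := by
  refine tendsto_order.2 ⟨fun c hc => ?_, fun c hc => ?_⟩
  · have hstep' : ∀ᶠ k in atTop,
        -greedySum x y (k + 1) < -c ∨ -greedySum x y (k + 1) ≤ -greedySum x y k := by
      filter_upwards [(tendsto_order.1 hstep).1 c hc] with k hk
      rcases le_or_gt (greedySum x y k) 0 with h | h
      · exact .inr (neg_le_neg (greedySum_le_greedySum_succ hx₀ h))
      · exact .inl (by linarith)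
    have hfreq : ∃ᶠ k in atTop, -greedySum x y k < -c :=
      (frequently_greedySum_pos hx).mono fun k hk => by linarith
    simpa using eventually_lt_of_frequently_lt hstep' hfreq
  · have hstep' : ∀ᶠ k in atTop,
        greedySum x y (k + 1) < c ∨ greedySum x y (k + 1) ≤ greedySum x y k := by
      filter_upwards [(tendsto_order.1 hstep).2 c hc] with k hk
      rcases le_or_gt (greedySum x y k) 0 with h | h
      · exact .inl (by linarith)
      · exact .inr (greedySum_succ_le_greedySum hy₀ h)
    exact eventually_lt_of_frequently_lt hstep'
      ((frequently_greedySum_nonpos hy).mono fun k hk => hk.trans_lt hc)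

end GreedyMerge

section MergeNth

variable (A P : ℕ → Prop) [DecidablePred A] [DecidablePred P]

noncomputable def mergeNth (k : ℕ) : ℕ :=
  if A k then nth P (count A k) else nth (¬P ·) (count (¬A ·) k)

variable {A P}

theorem mergeNth_bijective (hA : {k | A k}.Infinite) (hA' : {k | ¬A k}.Infinite)
    (hP : {n | P n}.Infinite) (hP' : {n | ¬P n}.Infinite) : (mergeNth A P).Bijective := by
  constructor
  · intro k l hkl
    unfold mergeNth at hkl
    split_ifs at hkl with hk hl hl
    · exact count_injective hk hl (nth_injective hP hkl)
    · exact (nth_mem_of_infinite hP' _ (hkl ▸ nth_mem_of_infinite hP _)).elim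
    · exact (nth_mem_of_infinite hP' _ (hkl ▸ nth_mem_of_infinite hP _)).elim
    · exact count_injective (p := (¬A ·)) hk hl (nth_injective hP' hkl)
  · intro n
    by_cases hn : P n
    · refine ⟨nth A (count P n), ?_⟩
      rw [mergeNth, if_pos (nth_mem_of_infinite hA _), count_nth_of_infinite hA, nth_count hn]
    · refine ⟨nth (¬A ·) (count (¬P ·) n), ?_⟩
      rw [mergeNth, if_neg (nth_mem_of_infinite hA' _), count_nth_of_infinite hA', nth_count hn]

end MergeNth

theorem exists_perm_tendsto_sum_range_zero {a : ℕ → ℝ} (h₀ : Tendsto a atTop (𝓝 0))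
    (hmax : ¬Summable fun n => max (a n) 0) (hmin : ¬Summable fun n => min (a n) 0) :
    ∃ π : Equiv.Perm ℕ, Tendsto (fun N => ∑ n ∈ range N, a (π n)) atTop (𝓝 0) := by
  set P : ℕ → Prop := (0 < a ·)
  obtain ⟨hP, hx⟩ := infinite_and_not_summable_comp_nth (P := P)
    (fun n hn => max_eq_right (not_lt.1 hn)) hmax
  obtain ⟨hP', hy⟩ := infinite_and_not_summable_comp_nth (P := (¬P ·))
    (fun n hn => min_eq_right (not_not.1 hn).le) hmin
  set x := fun i => a (nth P i)
  set y := fun j => a (nth (¬P ·) j)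
  have hx₀ (i : ℕ) : 0 ≤ x i := (nth_mem_of_infinite hP i).le
  have hy₀ (j : ℕ) : y j ≤ 0 := not_lt.1 (nth_mem_of_infinite hP' j)
  have hxtop := (not_summable_iff_tendsto_nat_atTop_of_nonneg hx₀).1
    fun hs => hx (hs.congr fun i => (max_eq_left (hx₀ i)).symm)
  have hybot := (not_summable_iff_tendsto_nat_atBot_of_nonpos hy₀).1
    fun hs => hy (hs.congr fun j => (min_eq_left (hy₀ j)).symm)
  set A : ℕ → Prop := (greedySum x y · ≤ 0)
  have hπ := mergeNth_bijective (A := A)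
    (Nat.frequently_atTop_iff_infinite.1 (frequently_greedySum_nonpos hybot))
    (Nat.frequently_atTop_iff_infinite.1
      ((frequently_greedySum_pos hxtop).mono fun _ => not_le.2)) hP hP'
  have hterm (k : ℕ) : a (mergeNth A P k) = greedySum x y (k + 1) - greedySum x y k := by
    rw [greedySum_succ_sub, mergeNth]
    split_ifs <;> rfl
  have hsum (N : ℕ) : ∑ n ∈ range N, a (mergeNth A P n) = greedySum x y N := by
    simp only [hterm, sum_range_sub, greedySum_zero, sub_zero]
  refine ⟨Equiv.ofBijective _ hπ, ?_⟩
  simp only [Equiv.ofBijective_apply, hsum]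
  refine tendsto_greedySum_zero hx₀ hy₀ hxtop hybot ?_
  simp only [← hterm]
  exact h₀.comp hπ.injective.nat_tendsto_atTop

theorem stmt4 (a : ℕ → ℝ) :
    (∃ π : Equiv.Perm ℕ,
      (∃ s : ℝ, Tendsto (fun N => ∑ n ∈ Finset.range N, a (π n)) atTop (𝓝 s)) ∧
      ¬ Summable (fun n => |a (π n)|)) ↔
    (Tendsto a atTop (𝓝 0) ∧
     Tendsto (fun N => ∑ n ∈ Finset.range N, max (a n) 0) atTop atTop ∧
     Tendsto (fun N => ∑ n ∈ Finset.range N, min (a n) 0) atTop atBot) := by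
  constructor
  · rintro ⟨π, ⟨s, hs⟩, habs⟩
    have hmax : ¬Summable fun n => max (a n) 0 := fun h =>
      habs (summable_abs_of_tendsto_sum_range_of_summable_max hs (π.summable_iff.2 h))
    have hmin : ¬Summable fun n => min (a n) 0 := fun h =>
      habs (summable_abs_of_tendsto_sum_range_of_summable_min hs (π.summable_iff.2 h))
    refine ⟨?_, (not_summable_iff_tendsto_nat_atTop_of_nonneg fun n => le_max_right _ _).1 hmax,
      (not_summable_iff_tendsto_nat_atBot_of_nonpos fun n => min_le_right _ _).1 hmin⟩
    simpa [Function.comp_def] using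
      (tendsto_zero_of_tendsto_sum_range hs).comp π.symm.injective.nat_tendsto_atTop
  · rintro ⟨h₀, htop, hbot⟩
    have hmax : ¬Summable fun n => max (a n) 0 := fun h =>
      not_tendsto_atTop_of_tendsto_nhds h.hasSum.tendsto_sum_nat htop
    have hmin : ¬Summable fun n => min (a n) 0 := fun h =>
      not_tendsto_atBot_of_tendsto_nhds h.hasSum.tendsto_sum_nat hbot
    obtain ⟨π, hπ⟩ := exists_perm_tendsto_sum_range_zero h₀ hmax hmin
    refine ⟨π, ⟨0, hπ⟩, fun habs => hmax ?_⟩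
    exact ((π.summable_iff (f := fun n => |a n|)).1 habs).of_nonneg_of_le
      (fun n => le_max_right _ _) fun n => max_le (le_abs_self _) (abs_nonneg _)
end

section
/- For any permutation π of ℕ, there exists a permutation σ of ℕ such that σ[{0,...,n-1}] = {0,...,n-1} for infinitely many n, and σ[{0,...,n-1}] = π[{0,...,n-1}] for infinitely many n. -/
/-!
Choose `b 0 < b 1 < ⋯` so fast that `π` and `π⁻¹` map `range (b k)` into `range (b (k + 1))`.
Then the sets `π[range (b k)]` (`k` even) and `range (b k)` (`k` odd) form an increasing chain
exhausting `ℕ` whose `k`-th member has `b k` elements, just like the chain `range (b k)`.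
Any two exhausting chains with the same cardinalities are matched by a bijection, obtained by
gluing bijections between their successive differences; the bijection matching `range (b k)`
with the alternating chain is the required `σ`.
-/

open Finset

namespace Finset

variable {α β : Type*}

noncomputable def entryIndex (S : ℕ → Finset α) (a : α) : ℕ := sInf {k | a ∈ S k}

def layer [DecidableEq α] (S : ℕ → Finset α) : ℕ → Finset α
  | 0 => S 0
  | k + 1 => S (k + 1) \ S k

section Chain

variable {S : ℕ → Finset α}

theorem entryIndex_le_iff (hS : Monotone S) (hcov : ∀ a, ∃ k, a ∈ S k) {a : α} {k : ℕ} :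
    entryIndex S a ≤ k ↔ a ∈ S k :=
  ⟨fun h => hS h (Nat.sInf_mem (hcov a)), fun h => Nat.sInf_le h⟩

theorem mem_layer_iff [DecidableEq α] (hS : Monotone S) (hcov : ∀ a, ∃ k, a ∈ S k)
    {a : α} {k : ℕ} : a ∈ layer S k ↔ entryIndex S a = k := by
  cases k with
  | zero => simp only [layer, ← entryIndex_le_iff hS hcov, Nat.le_zero]
  | succ k =>
    simp only [layer, mem_sdiff, ← entryIndex_le_iff hS hcov]
    omega

theorem card_layer_eq [DecidableEq α] [DecidableEq β] {T : ℕ → Finset β}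
    (hS : Monotone S) (hT : Monotone T) (hcard : ∀ k, #(S k) = #(T k)) (k : ℕ) :
    #(layer S k) = #(layer T k) := by
  cases k with
  | zero => exact hcard 0
  | succ k =>
    simp only [layer, card_sdiff_of_subset (hS k.le_succ), card_sdiff_of_subset (hT k.le_succ),
      hcard]

end Chain

theorem exists_equiv_image_eq_of_card_eq [DecidableEq α] [DecidableEq β]
    {S : ℕ → Finset α} {T : ℕ → Finset β} (hS : Monotone S) (hT : Monotone T)
    (hScov : ∀ a, ∃ k, a ∈ S k) (hTcov : ∀ b, ∃ k, b ∈ T k) (hcard : ∀ k, #(S k) = #(T k)) :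
    ∃ e : α ≃ β, ∀ k, (S k).image e = T k := by
  let e : α ≃ β := Equiv.ofFiberEquiv fun k =>
    (Equiv.subtypeEquivRight fun _ => mem_layer_iff hS hScov).symm.trans <|
      (Finset.equivOfCardEq (card_layer_eq hS hT hcard k)).trans <|
        Equiv.subtypeEquivRight fun _ => mem_layer_iff hT hTcov
  refine ⟨e, fun k => ?_⟩
  ext b
  obtain ⟨a, rfl⟩ := e.surjective b
  rw [e.injective.mem_finset_image, ← entryIndex_le_iff hS hScov,
    ← entryIndex_le_iff hT hTcov, Equiv.ofFiberEquiv_map (g := entryIndex T)]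

end Finset

namespace Equiv.Perm

theorem exists_strictMono_image_range_subset (π : Equiv.Perm ℕ) :
    ∃ b : ℕ → ℕ, StrictMono b ∧ ∀ k,
      (range (b k)).image π ⊆ range (b (k + 1)) ∧
        (range (b k)).image π.symm ⊆ range (b (k + 1)) := by
  have hstep : ∀ n, ∃ m, n < m ∧ (range n).image π ⊆ range m ∧ (range n).image π.symm ⊆ range m :=
    fun n => by
      obtain ⟨m, hm⟩ := exists_nat_subset_range (range (n + 1) ∪ (range n).image π ∪
        (range n).image π.symm)
      simp only [union_subset_iff] at hm
      exact ⟨m, by simpa using hm.1.1 (self_mem_range_succ n), hm.1.2, hm.2⟩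
  choose step hlt himage using hstep
  refine ⟨fun k => step^[k] 0, strictMono_nat_of_lt_succ fun k => ?_, fun k => ?_⟩ <;>
    simp only [Function.iterate_succ_apply']
  exacts [hlt _, himage _]

def alternatingChain (π : Equiv.Perm ℕ) (b : ℕ → ℕ) (k : ℕ) : Finset ℕ :=
  if Even k then (range (b k)).image π else range (b k)

section AlternatingChain

variable {π : Equiv.Perm ℕ} {b : ℕ → ℕ}

theorem card_alternatingChain (k : ℕ) : #(alternatingChain π b k) = b k := by
  unfold alternatingChain
  split_ifs <;> simp [card_image_of_injective _ π.injective]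

theorem monotone_alternatingChain
    (hb : ∀ k, (range (b k)).image π ⊆ range (b (k + 1)) ∧
      (range (b k)).image π.symm ⊆ range (b (k + 1))) :
    Monotone (alternatingChain π b) := by
  refine monotone_nat_of_le_succ fun k => ?_
  rcases Nat.even_or_odd k with hk | hk
  · simpa [alternatingChain, hk, Nat.even_add_one] using (hb k).1
  · have hk' : Even (k + 1) := hk.add_one
    simp only [alternatingChain, Nat.not_even_iff_odd.mpr hk, hk', if_true, if_false]
    intro x hx
    exact mem_image.mpr ⟨π.symm x, (hb k).2 (mem_image_of_mem _ hx), π.apply_symm_apply x⟩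

theorem mem_alternatingChain (hb : StrictMono b) (m : ℕ) :
    m ∈ alternatingChain π b (2 * m + 1) := by
  have : Odd (2 * m + 1) := odd_two_mul_add_one m
  simp only [alternatingChain, Nat.not_even_iff_odd.mpr this, if_false, mem_range]
  have := hb.le_apply (x := 2 * m + 1)
  omega

end AlternatingChain

end Equiv.Perm

theorem stmt5 (π : Equiv.Perm ℕ) :
    ∃ σ : Equiv.Perm ℕ,
      {n : ℕ | (Finset.range n).image σ = Finset.range n}.Infinite ∧
      {n : ℕ | (Finset.range n).image σ = (Finset.range n).image π}.Infinite := by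
  obtain ⟨b, hb, hbπ⟩ := π.exists_strictMono_image_range_subset
  obtain ⟨σ, hσ⟩ := exists_equiv_image_eq_of_card_eq (S := fun k => range (b k)) (T := π.alternatingChain b)
    (range_mono.comp hb.monotone)
    (Equiv.Perm.monotone_alternatingChain hbπ)
    (fun m => ⟨m + 1, mem_range.mpr (hb.le_apply.trans_lt (hb m.lt_succ_self))⟩)
    (fun m => ⟨_, Equiv.Perm.mem_alternatingChain hb m⟩)
    (fun k => by rw [card_range, Equiv.Perm.card_alternatingChain])
  refine ⟨σ, Set.infinite_of_injective_forall_mem (f := fun j => b (2 * j + 1))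
    (hb.injective.comp fun _ _ h => by omega) fun j => ?_,
    Set.infinite_of_injective_forall_mem (f := fun j => b (2 * j))
    (hb.injective.comp fun _ _ h => by omega) fun j => ?_⟩
  · simpa [Equiv.Perm.alternatingChain, Nat.not_even_iff_odd.mpr (odd_two_mul_add_one j)]
      using hσ (2 * j + 1)
  · simpa [Equiv.Perm.alternatingChain] using hσ (2 * j)
end

section
/- Let (x_n) and (y_n) be sequences of real numbers such that the asymptotic mean μ(x) = lim_N (x_0 + ... + x_{N-1})/N exists and equals m. Then there exists an infinite set A = {a_0 < a_1 < ...} ⊆ ℕ with infinite complement {b_0 < b_1 < ...} such that the sequence z defined by z_{b_n} = x_n and z_{a_n} = y_n has asymptotic mean m. -/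
/-!
Insert `y` along a very sparse set of positions `a₀ < a₁ < …` and fill the remaining
positions with `x` in order. If `aₙ ≥ (n + 1) (n + 1 + |y₀| + … + |yₙ|)`, then among the first
`N` positions only `j = o(N)` carry a term of `y`, and those contribute at most
`|y₀| + … + |y_{j-1}| ≤ a_{j-1} / j < N / j` to the partial sum. The first `N` terms of `z` are
thus the first `N - o(N)` terms of `x` plus `o(N)`, so `z` has the same mean as `x`.
-/

open Filter Topology

def amean (x : ℕ → ℝ) (m : ℝ) : Prop :=
  Tendsto (fun N => (∑ n ∈ Finset.range N, x n) / (N : ℝ)) atTop (𝓝 m)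

open Finset Nat

namespace Nat

variable {p : ℕ → Prop} [DecidablePred p]

theorem count_add_count_not (N : ℕ) : count p N + count (fun k => ¬p k) N = N := by
  simp only [count_eq_card_filter_range]
  exact (card_filter_add_card_filter_not _).trans (card_range N)

theorem tendsto_count_atTop (hp : {k | p k}.Infinite) : Tendsto (count p) atTop atTop :=
  tendsto_atTop_atTop_of_monotone (count_monotone p) fun n =>
    ⟨nth p n + 1, (count_nth_succ_of_infinite hp n).ge.trans' n.le_succ⟩

end Nat

theorem StrictMono.nth_range_eq {a : ℕ → ℕ} (ha : StrictMono a) :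
    nth (· ∈ Set.range a) = a := by
  funext n
  have h := nth_comp_of_strictMono ha (p := (· ∈ Set.range a)) (n := n) (fun _ => id)
    fun hf => absurd hf (Set.infinite_range_of_injective ha.injective)
  simpa using h.symm

section Interleave

variable (p : ℕ → Prop) [DecidablePred p] {M : Type*}

def interleave (x y : ℕ → M) (k : ℕ) : M :=
  if p k then y (count p k) else x (count (fun i => ¬p i) k)

variable {p} {x y : ℕ → M}

theorem interleave_nth (hp : {k | p k}.Infinite) (n : ℕ) :
    interleave p x y (nth p n) = y n := by
  rw [interleave, if_pos (nth_mem_of_infinite hp n), count_nth_of_infinite hp]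

theorem interleave_nth_not (hp : {k | ¬p k}.Infinite) (n : ℕ) :
    interleave p x y (nth (fun k => ¬p k) n) = x n := by
  rw [interleave, if_neg (nth_mem_of_infinite hp n), count_nth_of_infinite hp]

theorem sum_range_interleave [AddCommMonoid M] (N : ℕ) :
    ∑ k ∈ range N, interleave p x y k =
      ∑ n ∈ range (count (fun k => ¬p k) N), x n + ∑ n ∈ range (count p N), y n := by
  induction N with
  | zero => simp
  | succ N ih =>
    rw [sum_range_succ, ih]
    by_cases h : p N
    · simp only [interleave, count_succ, if_pos h, if_neg (not_not_intro h), sum_range_succ,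
        add_zero]
      exact add_assoc _ _ _
    · simp only [interleave, count_succ, if_pos h, if_neg h, sum_range_succ, add_zero]
      exact add_right_comm _ _ _

end Interleave

section Density

variable {p : ℕ → Prop} [DecidablePred p]

theorem tendsto_sum_range_count_div_zero (hp : {k | p k}.Infinite) {y : ℕ → ℝ}
    (hy : ∀ n : ℕ, ((n : ℝ) + 1) * ∑ i ∈ range (n + 1), |y i| ≤ nth p n) :
    Tendsto (fun N => (∑ n ∈ range (count p N), y n) / N) atTop (𝓝 0) := by
  refine squeeze_zero_norm' ?_
    (tendsto_one_div_atTop_nhds_zero_nat.comp (tendsto_count_atTop hp))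
  filter_upwards [(tendsto_count_atTop hp).eventually_ne_atTop 0] with N hN
  obtain ⟨j, hj⟩ := exists_eq_add_one_of_ne_zero hN
  have hjN : (nth p j : ℝ) < N := by exact_mod_cast nth_lt_of_lt_count (hj ▸ lt_add_one j)
  have hN : (0 : ℝ) < N := (Nat.cast_nonneg _).trans_lt hjN
  rw [Function.comp_apply, hj, norm_div, Real.norm_of_nonneg hN.le, cast_add_one]
  calc ‖∑ n ∈ range (j + 1), y n‖ / N ≤ (∑ n ∈ range (j + 1), |y n|) / N := by
        gcongr
        exact abs_sum_le_sum_abs _ _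
    _ ≤ 1 / ((j : ℝ) + 1) := by
        rw [div_le_div_iff₀ hN (by positivity), one_mul, mul_comm]
        exact (hy j).trans hjN.le

theorem tendsto_count_div_zero (hp : {k | p k}.Infinite)
    (h : ∀ n, (n + 1) * (n + 1) ≤ nth p n) :
    Tendsto (fun N => (count p N : ℝ) / N) atTop (𝓝 0) := by
  simpa using tendsto_sum_range_count_div_zero hp (y := fun _ => 1) fun n => by
    simpa using (by exact_mod_cast h n : ((n : ℝ) + 1) * (n + 1) ≤ (nth p n : ℝ))

theorem tendsto_count_not_div_one (h : Tendsto (fun N => (count p N : ℝ) / N) atTop (𝓝 0)) :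
    Tendsto (fun N => (count (fun k => ¬p k) N : ℝ) / N) atTop (𝓝 1) := by
  have := (tendsto_const_nhds (x := (1 : ℝ))).sub h
  rw [sub_zero] at this
  refine this.congr' ?_
  filter_upwards [eventually_ne_atTop 0] with N hN
  have hN : (N : ℝ) ≠ 0 := by exact_mod_cast hN
  have hsum : (count p N : ℝ) + count (fun k => ¬p k) N = N := by
    exact_mod_cast count_add_count_not N
  field_simp
  linarith

end Density

theorem amean.tendsto_sum_range_div {x : ℕ → ℝ} {m : ℝ} (hx : amean x m) {c : ℕ → ℕ}
    (hc : Tendsto c atTop atTop) (hc' : Tendsto (fun N => (c N : ℝ) / N) atTop (𝓝 1)) :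
    Tendsto (fun N => (∑ n ∈ range (c N), x n) / N) atTop (𝓝 m) := by
  have := (hx.comp hc).mul hc'
  rw [mul_one] at this
  refine this.congr' ?_
  filter_upwards [hc.eventually_ne_atTop 0] with N hN
  rw [Function.comp_apply, div_mul_div_cancel₀ (by exact_mod_cast hN)]

theorem amean_interleave {x y : ℕ → ℝ} {m : ℝ} (hx : amean x m) {p : ℕ → Prop}
    [DecidablePred p] (hq : {k | ¬p k}.Infinite)
    (hp : Tendsto (fun N => (count p N : ℝ) / N) atTop (𝓝 0))
    (hy : Tendsto (fun N => (∑ n ∈ range (count p N), y n) / N) atTop (𝓝 0)) :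
    amean (interleave p x y) m := by
  have := (hx.tendsto_sum_range_div (tendsto_count_atTop hq) (tendsto_count_not_div_one hp)).add hy
  rw [add_zero] at this
  simpa only [amean, sum_range_interleave, add_div] using this

-- The factor `2` keeps every odd number out of the range, so its complement is infinite.
noncomputable def sparseIndex (y : ℕ → ℝ) (n : ℕ) : ℕ :=
  2 * ((n + 1) * (n + 1 + ⌈∑ i ∈ range (n + 1), |y i|⌉₊))

theorem sparseIndex_strictMono (y : ℕ → ℝ) : StrictMono (sparseIndex y) := by
  refine strictMono_nat_of_lt_succ fun n => ?_
  have : ⌈∑ i ∈ range (n + 1), |y i|⌉₊ ≤ ⌈∑ i ∈ range (n + 1 + 1), |y i|⌉₊ :=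
    ceil_mono (sum_le_sum_of_subset_of_nonneg (range_subset_range.2 (n + 1).le_succ)
      fun _ _ _ => abs_nonneg _)
  unfold sparseIndex
  gcongr 2 * ?_
  exact Nat.mul_lt_mul'' (by omega) (by omega)

theorem sparseIndex_ne_odd (y : ℕ → ℝ) (n k : ℕ) : sparseIndex y n ≠ 2 * k + 1 := by
  unfold sparseIndex
  omega

theorem sq_le_sparseIndex (y : ℕ → ℝ) (n : ℕ) : (n + 1) * (n + 1) ≤ sparseIndex y n := by
  unfold sparseIndex
  nlinarith

theorem mul_sum_abs_le_sparseIndex (y : ℕ → ℝ) (n : ℕ) :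
    ((n : ℝ) + 1) * ∑ i ∈ range (n + 1), |y i| ≤ sparseIndex y n := by
  have := le_ceil (∑ i ∈ range (n + 1), |y i|)
  unfold sparseIndex
  push_cast
  nlinarith [sum_nonneg fun i (_ : i ∈ range (n + 1)) => abs_nonneg (y i)]

theorem stmt15 (x y : ℕ → ℝ) (m : ℝ) (hx : amean x m) :
    ∃ a b : ℕ → ℕ, StrictMono a ∧ StrictMono b ∧
      (∀ k : ℕ, (∃ n, a n = k) ↔ ¬ ∃ n, b n = k) ∧
      ∃ z : ℕ → ℝ, (∀ n, z (b n) = x n) ∧ (∀ n, z (a n) = y n) ∧ amean z m := by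
  classical
  set p : ℕ → Prop := (· ∈ Set.range (sparseIndex y))
  have hnth : nth p = sparseIndex y := (sparseIndex_strictMono y).nth_range_eq
  have hp : {k | p k}.Infinite :=
    Set.infinite_range_of_injective (sparseIndex_strictMono y).injective
  have hq : {k | ¬p k}.Infinite :=
    Set.infinite_of_injective_forall_mem (f := fun k => 2 * k + 1) (fun _ _ h => by simpa using h)
      fun k ⟨n, hn⟩ => sparseIndex_ne_odd y n k hn
  refine ⟨nth p, nth (fun k => ¬p k), nth_strictMono hp, nth_strictMono hq, fun k => ?_,
    interleave p x y, interleave_nth_not hq, interleave_nth hp, ?_⟩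
  · rw [← Set.mem_range, ← Set.mem_range, range_nth_of_infinite hp, range_nth_of_infinite hq]
    exact not_not.symm
  · refine amean_interleave hx hq (tendsto_count_div_zero hp ?_)
      (tendsto_sum_range_count_div_zero hp ?_)
    all_goals rw [hnth]
    exacts [sq_le_sparseIndex y, mul_sum_abs_le_sparseIndex y]
end

section
/- Let Y ⊆ ℝ with |Y| < 𝔠 (the cardinality of the continuum). Suppose ℱ is a family of permutations of ℕ such that for every conditionally convergent real series ∑ a_n there exist π ∈ ℱ and y ∈ Y with y ≠ ∑ a_n and ∑ a_{π(n)} = y. Then |ℱ| = 𝔠. -/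
/-!
Fix a conditionally convergent series `∑ aₙ` with sum `0`. For every `c > 0` the series `∑ c aₙ`
is again conditionally convergent with sum `0`, so some `π ∈ F` and `y ∈ Y`, `y ≠ 0`, satisfy
`∑ a_{π n} = y / c`; as `y ≠ 0`, the pair `(π, y)` determines `c`. Hence `𝔠 ≤ |F| ⬝ |Y|`, which
together with `|Y| < 𝔠` forces `|F| ≥ 𝔠`, while `|F| ≤ |Perm ℕ| = 𝔠`.
-/

open Filter Topology Finset Cardinal

theorem Cardinal.mk_perm_nat : #(Equiv.Perm ℕ) = 𝔠 := by
  rw [mk_perm_eq_two_power, mk_nat, two_power_aleph0]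

theorem tendsto_sum_range_const_mul_iff {K : Type*} [DivisionRing K] [TopologicalSpace K]
    [ContinuousMul K] {a : ℕ → K} {c s : K} (hc : c ≠ 0) :
    Tendsto (fun N => ∑ n ∈ range N, c * a n) atTop (𝓝 (c * s)) ↔
      Tendsto (fun N => ∑ n ∈ range N, a n) atTop (𝓝 s) := by
  simp_rw [← mul_sum]
  exact tendsto_const_smul_iff₀ hc

theorem not_summable_abs_const_mul {a : ℕ → ℝ} {c : ℝ} (hc : c ≠ 0)
    (ha : ¬Summable fun n => |a n|) : ¬Summable fun n => |c * a n| := by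
  simpa only [abs_mul, summable_mul_left_iff (abs_ne_zero.mpr hc)] using ha

/-- The series `b 0 - b 0 + b 1 - b 1 + b 2 - b 2 + ⋯`. -/
noncomputable def interleaveNeg (b : ℕ → ℝ) (n : ℕ) : ℝ := (-1) ^ n * b (n / 2)

theorem sum_range_interleaveNeg (b : ℕ → ℝ) (N : ℕ) :
    ∑ n ∈ range N, interleaveNeg b n = if Even N then 0 else b (N / 2) := by
  induction N with
  | zero => simp
  | succ N ih =>
    rw [sum_range_succ, ih, interleaveNeg]
    rcases Nat.even_or_odd N with hN | hN
    · have hdiv : (N + 1) / 2 = N / 2 := by rcases hN with ⟨k, rfl⟩; omega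
      simp [hN, hN.neg_one_pow, Nat.even_add_one, hdiv]
    · simp [hN.neg_one_pow, Nat.even_add_one, Nat.not_even_iff_odd.mpr hN]

theorem tendsto_sum_range_interleaveNeg {b : ℕ → ℝ} (hb : Tendsto b atTop (𝓝 0)) :
    Tendsto (fun N => ∑ n ∈ range N, interleaveNeg b n) atTop (𝓝 0) := by
  have hb2 : Tendsto (fun N => b (N / 2)) atTop (𝓝 0) :=
    hb.comp (Nat.tendsto_div_const_atTop two_ne_zero)
  refine squeeze_zero_norm (fun N => ?_) (tendsto_zero_iff_norm_tendsto_zero.mp hb2)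
  rw [sum_range_interleaveNeg]
  split_ifs <;> simp

theorem not_summable_abs_interleaveNeg {b : ℕ → ℝ} (hb : ¬Summable b) :
    ¬Summable fun n => |interleaveNeg b n| := by
  intro h
  refine hb (Summable.of_abs ?_)
  simpa [interleaveNeg, Function.comp_def] using
    h.comp_injective (mul_right_injective₀ (two_ne_zero' ℕ))

theorem exists_condConvergent_sum_zero :
    ∃ a : ℕ → ℝ, Tendsto (fun N => ∑ n ∈ range N, a n) atTop (𝓝 0) ∧
      ¬Summable fun n => |a n| := by
  refine ⟨interleaveNeg fun k => 1 / ((k : ℝ) + 1),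
    tendsto_sum_range_interleaveNeg tendsto_one_div_add_atTop_nhds_zero_nat,
    not_summable_abs_interleaveNeg ?_⟩
  simpa using (summable_nat_add_iff 1).not.mpr Real.not_summable_one_div_natCast

theorem continuum_le_mk_mul_mk {Y : Set ℝ} {F : Set (Equiv.Perm ℕ)}
    (hF : ∀ (a : ℕ → ℝ) (s : ℝ),
      Tendsto (fun N => ∑ n ∈ range N, a n) atTop (𝓝 s) →
      ¬ Summable (fun n => |a n|) →
      ∃ π ∈ F, ∃ y ∈ Y, y ≠ s ∧
        Tendsto (fun N => ∑ n ∈ range N, a (π n)) atTop (𝓝 y)) :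
    𝔠 ≤ #F * #Y := by
  obtain ⟨a, ha, ha_abs⟩ := exists_condConvergent_sum_zero
  have key : ∀ c : Set.Ioi (0 : ℝ), ∃ p : F × Y, (p.2 : ℝ) ≠ 0 ∧
      Tendsto (fun N => ∑ n ∈ range N, a (p.1.1 n)) atTop (𝓝 (p.2 / c)) := by
    rintro ⟨c, hc_pos⟩
    have hc : c ≠ 0 := hc_pos.ne'
    obtain ⟨π, hπ, y, hy, hy0, hlim⟩ := hF (fun n => c * a n) 0
      (by simpa using (tendsto_sum_range_const_mul_iff hc).mpr ha)
      (not_summable_abs_const_mul hc ha_abs)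
    refine ⟨(⟨π, hπ⟩, ⟨y, hy⟩), hy0, (tendsto_sum_range_const_mul_iff hc).mp ?_⟩
    rwa [mul_div_cancel₀ y hc]
  choose g hg using key
  have hg_inj : Function.Injective g := by
    intro c₁ c₂ h
    have hlim := (hg c₁).2
    rw [h] at hlim
    have hdiv := tendsto_nhds_unique hlim (hg c₂).2
    rw [div_eq_mul_inv, div_eq_mul_inv] at hdiv
    exact Subtype.ext (inv_injective (mul_left_cancel₀ (hg c₂).1 hdiv))
  calc 𝔠 = #(Set.Ioi (0 : ℝ)) := (mk_Ioi_real 0).symm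
    _ ≤ #(F × Y) := mk_le_of_injective hg_inj
    _ = #F * #Y := by rw [mk_prod, lift_id, lift_id]

theorem stmt17 (Y : Set ℝ) (hY : Cardinal.mk Y < Cardinal.continuum)
    (F : Set (Equiv.Perm ℕ))
    (hF : ∀ (a : ℕ → ℝ) (s : ℝ),
      Tendsto (fun N => ∑ n ∈ Finset.range N, a n) atTop (𝓝 s) →
      ¬ Summable (fun n => |a n|) →
      ∃ π ∈ F, ∃ y ∈ Y, y ≠ s ∧
        Tendsto (fun N => ∑ n ∈ Finset.range N, a (π n)) atTop (𝓝 y)) :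
    Cardinal.mk F = Cardinal.continuum := by
  refine le_antisymm ((mk_set_le F).trans mk_perm_nat.le) ?_
  by_contra! hF_lt
  exact (continuum_le_mk_mul_mk hF).not_gt (mul_lt_of_lt aleph0_le_continuum hF_lt hY)
end

section
/- Let g : ℕ → ℕ satisfy g(n) ≥ 2^n for all n ≥ n_0, and define a_0 = 0, a_{n+1} = 2^{a_n} for n < n_0 and a_{n+1} = g(a_n) for n ≥ n_0. Let π be a permutation of ℕ such that for all but finitely many n, a_{n+1} ∉ {π^{-1}(k) : k ≤ a_n}. Then d(π[{a_n : n ∈ ℕ}]) = 0 = d({a_n : n ∈ ℕ}). -/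
/-! Since `a (n + 1) ≥ 2 ^ a n` and `a n ≥ n`, we get `2 ^ n ≤ a (n + 1)`, so `[0, M)`
contains at most `log₂ M + O(1)` of its terms. The condition on `π` says `a n < π (a (n + 1))`
for large `n`, so `π (a (n + 2)) ≥ 2 ^ n` eventually and the same count applies to the image. -/

open Filter Topology

lemma tendsto_natLog_add_const_div_atTop (C : ℕ) :
    Tendsto (fun M : ℕ => ((Nat.log 2 M : ℝ) + C) / M) atTop (𝓝 0) := by
  have hlogb : Tendsto (fun x : ℝ => Real.logb 2 x / x) atTop (𝓝 0) := by
    simpa using Real.tendsto_pow_logb_div_mul_add_atTop (b := 2) 1 0 1 one_ne_zero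
  have hsum : Tendsto (fun M : ℕ => Real.logb 2 M / M + C / M) atTop (𝓝 0) := by
    simpa using (hlogb.comp tendsto_natCast_atTop_atTop).add
      (tendsto_const_div_atTop_nhds_zero_nat (C : ℝ))
  refine squeeze_zero (fun M => by positivity) (fun M => ?_) hsum
  rw [← add_div]
  gcongr
  exact Real.natLog_le_logb M 2

lemma dens_zero_of_cnt_le_natLog_add (A : Set ℕ) (C : ℕ)
    (h : ∀ M, cnt A M ≤ Nat.log 2 M + C) : dens A 0 := by
  refine squeeze_zero (fun M => by positivity) (fun M => ?_) (tendsto_natLog_add_const_div_atTop C)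
  gcongr
  exact_mod_cast h M

lemma cnt_range_le_natLog_add (f : ℕ → ℕ) (N d : ℕ) (hf : ∀ j ≥ N, 2 ^ j ≤ f (j + d))
    (M : ℕ) : cnt (Set.range f) M ≤ Nat.log 2 M + (N + d + 1) := by
  classical
  have hsub : (Finset.range M).filter (· ∈ Set.range f) ⊆
      (Finset.range (Nat.log 2 M + (N + d + 1))).image f := by
    intro m hm
    simp only [Finset.mem_filter, Finset.mem_range, Set.mem_range] at hm
    obtain ⟨hmM, i, rfl⟩ := hm
    refine Finset.mem_image.mpr ⟨i, Finset.mem_range.mpr ?_, rfl⟩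
    rcases lt_or_ge i (N + d) with hi | hi
    · omega
    · obtain ⟨j, rfl⟩ : ∃ j, i = j + d := ⟨i - d, by omega⟩
      have hj : j ≤ Nat.log 2 M :=
        Nat.le_log_of_pow_le one_lt_two ((hf j (by omega)).trans hmM.le)
      omega
  calc cnt (Set.range f) M
      ≤ ((Finset.range (Nat.log 2 M + (N + d + 1))).image f).card := Finset.card_le_card hsub
    _ ≤ Nat.log 2 M + (N + d + 1) := Finset.card_image_le.trans_eq (Finset.card_range _)

lemma two_pow_le_apply_succ (a : ℕ → ℕ) (ha : ∀ n, n ≤ a n → 2 ^ a n ≤ a (n + 1)) (n : ℕ) :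
    2 ^ n ≤ a (n + 1) := by
  induction n with
  | zero => exact Nat.one_le_two_pow.trans (ha 0 (Nat.zero_le _))
  | succ n ih =>
    have hle : n + 1 ≤ a (n + 1) := Nat.lt_two_pow_self.trans_le ih
    calc 2 ^ (n + 1) ≤ 2 ^ a (n + 1) := Nat.pow_le_pow_right two_pos hle
      _ ≤ a (n + 1 + 1) := ha (n + 1) hle

theorem stmt19_general (g : ℕ → ℕ) (n0 : ℕ) (hg : ∀ n ≥ n0, 2 ^ n ≤ g n)
    (a : ℕ → ℕ)
    (ha : ∀ n : ℕ, a (n + 1) = if n < n0 then 2 ^ (a n) else g (a n))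
    (π : Equiv.Perm ℕ)
    (hπ : ∀ᶠ n in atTop, ∀ k ≤ a n, π.symm k ≠ a (n + 1)) :
    dens (π '' Set.range a) 0 ∧ dens (Set.range a) 0 := by
  have hgrowth : ∀ n, 2 ^ n ≤ a (n + 1) := two_pow_le_apply_succ a fun n hn => by
    rw [ha n]
    split_ifs with h
    · exact le_rfl
    · exact hg (a n) ((not_lt.mp h).trans hn)
  obtain ⟨N, hN⟩ := eventually_atTop.mp hπ
  have hπgrowth : ∀ j ≥ N, 2 ^ j ≤ (π ∘ a) (j + 2) := fun j hj => by
    refine (hgrowth j).trans (not_le.mp fun hle => hN (j + 1) (by omega) _ hle ?_).le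
    simp
  constructor
  · rw [← Set.range_comp]
    exact dens_zero_of_cnt_le_natLog_add _ _ (cnt_range_le_natLog_add _ N 2 hπgrowth)
  · exact dens_zero_of_cnt_le_natLog_add _ _ (cnt_range_le_natLog_add a 0 1 fun j _ => hgrowth j)

theorem stmt19 (g : ℕ → ℕ) (n0 : ℕ) (hg : ∀ n ≥ n0, 2 ^ n ≤ g n)
    (a : ℕ → ℕ) (ha0 : a 0 = 0)
    (ha : ∀ n : ℕ, a (n + 1) = if n < n0 then 2 ^ (a n) else g (a n))
    (π : Equiv.Perm ℕ)
    (hπ : ∀ᶠ n in atTop, ∀ k ≤ a n, π.symm k ≠ a (n + 1)) :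
    dens (π '' Set.range a) 0 ∧ dens (Set.range a) 0 :=
  stmt19_general g n0 hg a ha π hπ
end
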